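/- Let p be an odd integer and q ≥ 2 an integer. The assignment a ↦ j, b ↦ exp(iπ/q) = cos(π/q) + sin(π/q)·i extends to a group homomorphism from ⟨a, b | a b a⁻¹ = b⁻¹, a^{2p} b^{q} = 1⟩ to the unit quaternions, and this homomorphism has non-abelian image. -/

import Mathlib

open Metric Real
open scoped Quaternion ComplexConjugate

/-- The relator set of `⟨a, b | a b a⁻¹ = b⁻¹, a^(2p) b^q = 1⟩`,
with `a = FreeGroup.of 0` and `b = FreeGroup.of 1`. -/
def surgeryRels (p : ℤ) (q : ℕ) : Set (FreeGroup (Fin 2)) :=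
  {FreeGroup.of 0 * FreeGroup.of 1 * (FreeGroup.of 0)⁻¹ * FreeGroup.of 1,
   (FreeGroup.of 0) ^ (2 * p) * (FreeGroup.of 1) ^ q}

/-!
Inside the unit quaternions, the circle `S¹ ⊂ ℂ ⊂ ℍ` is inverted by conjugation with `j`,
since `j z = z̄ j` and `z̄ = z⁻¹` for `|z| = 1`. With `b = exp(iπ/q)` we get `b^q = -1 = j²`,
so `a^(2p) b^q = (-1)^p · (-1) = 1` because `p` is odd. Finally `j` commutes with a complex number
only if it is real, and `sin(π/q) ≠ 0` for `q ≥ 2`.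
-/

theorem zpow_two_mul_mul_pow_eq_one {G : Type*} [Group G] {a b z : G} {p : ℤ} {q : ℕ}
    (hp : Odd p) (ha : a ^ 2 = z) (hb : b ^ q = z) (hz : z ^ 2 = 1) :
    a ^ (2 * p) * b ^ q = 1 := by
  obtain ⟨k, rfl⟩ := hp
  rw [zpow_mul, zpow_two, ← sq, ha, hb, zpow_add_one, zpow_mul, zpow_two, ← sq, hz, one_zpow,
    one_mul, ← sq, hz]

theorem lift_surgeryRels_eq_one {G : Type*} [Group G] {p : ℤ} {q : ℕ} {a b : G}
    (hconj : a * b * a⁻¹ * b = 1) (hpow : a ^ (2 * p) * b ^ q = 1) :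
    ∀ r ∈ surgeryRels p q, FreeGroup.lift ![a, b] r = 1 := by
  rintro r (rfl | rfl) <;> simpa

theorem Real.sin_pi_div_pos {x : ℝ} (hx : 1 < x) : 0 < sin (π / x) :=
  sin_pos_of_pos_of_lt_pi (div_pos pi_pos (by linarith)) (div_lt_self pi_pos hx)

namespace Quaternion

def j : ℍ := ⟨0, 0, 1, 0⟩

theorem j_ne_zero : j ≠ 0 := fun h => by simpa [j] using congrArg (·.imJ) h

theorem norm_j : ‖j‖ = 1 := by
  rw [← sq_eq_sq₀ (norm_nonneg _) zero_le_one, sq, ← normSq_eq_norm_mul_self, normSq_def']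
  simp [j]

theorem j_mul_j : j * j = -1 := by
  ext <;> simp only [re_mul, imI_mul, imJ_mul, imK_mul] <;> simp [j]

theorem j_mul_coeComplex (z : ℂ) : j * (z : ℍ) = ((conj z : ℂ) : ℍ) * j := by
  ext <;> simp only [re_mul, imI_mul, imJ_mul, imK_mul] <;> simp [j]

theorem norm_coeComplex (z : ℂ) : ‖(z : ℍ)‖ = ‖z‖ := by
  rw [← sq_eq_sq₀ (norm_nonneg _) (norm_nonneg _), ← Complex.normSq_eq_norm_sq, sq,
    ← normSq_eq_norm_mul_self, normSq_def']
  simp [Complex.normSq_apply, sq]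

theorem coeComplex_injective : Function.Injective ((↑) : ℂ → ℍ) := fun z w h => by
  apply Complex.ext
  · simpa using congrArg (·.re) h
  · simpa using congrArg (·.imI) h

theorem commute_j_coeComplex_iff (z : ℂ) : Commute j (z : ℍ) ↔ z.im = 0 := by
  rw [Commute, SemiconjBy, j_mul_coeComplex, mul_left_inj' j_ne_zero,
    coeComplex_injective.eq_iff, Complex.conj_eq_iff_im]

theorem coeComplex_exp_mul_I (θ : ℝ) :
    (Complex.exp (θ * Complex.I) : ℍ) = ⟨cos θ, sin θ, 0, 0⟩ := by
  ext <;> simp [Complex.exp_ofReal_mul_I_re, Complex.exp_ofReal_mul_I_im]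

def circleToSphere : Circle →* sphere (0 : ℍ) 1 where
  toFun w := ⟨(w : ℂ), by rw [mem_sphere_zero_iff_norm, norm_coeComplex, Circle.norm_coe]⟩
  map_one' := Subtype.ext coeComplex_one
  map_mul' w w' := Subtype.ext (coeComplex_mul w w')

def sphereJ : sphere (0 : ℍ) 1 := ⟨j, by simp [norm_j]⟩

theorem sphereJ_sq : sphereJ ^ 2 = circleToSphere (Circle.exp π) :=
  Subtype.ext <| by
    change j ^ 2 = ((Complex.exp (π * Complex.I) : ℂ) : ℍ)
    rw [sq, j_mul_j, Complex.exp_pi_mul_I, ← coe_ofComplex, map_neg, map_one]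

theorem sphereJ_mul_circleToSphere_mul_inv (w : Circle) :
    sphereJ * circleToSphere w * sphereJ⁻¹ = (circleToSphere w)⁻¹ := by
  rw [mul_inv_eq_iff_eq_mul, ← map_inv]
  exact Subtype.ext <| by
    change j * (w : ℂ) = ((w⁻¹ : Circle) : ℂ) * j
    rw [Circle.coe_inv_eq_conj, j_mul_coeComplex]

theorem commute_sphereJ_circleToSphere_iff (w : Circle) :
    Commute sphereJ (circleToSphere w) ↔ (w : ℂ).im = 0 := by
  rw [← commute_j_coeComplex_iff, Commute, SemiconjBy, Subtype.ext_iff]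
  rfl

end Quaternion

open Quaternion

/-- For `p` odd and `q ≥ 2`, the assignment `a ↦ j`, `b ↦ exp(iπ/q)` extends to a
homomorphism from `⟨a, b | a b a⁻¹ = b⁻¹, a^(2p) b^q = 1⟩` to the unit quaternions,
and this homomorphism has non-abelian image. -/
theorem stmt9 (p : ℤ) (hp : Odd p) (q : ℕ) (hq : 2 ≤ q) :
    ∃ ρ : PresentedGroup (surgeryRels p q) →* sphere (0 : Quaternion ℝ) 1,
      (ρ (PresentedGroup.of 0) : Quaternion ℝ) = (⟨0, 0, 1, 0⟩ : Quaternion ℝ) ∧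
      (ρ (PresentedGroup.of 1) : Quaternion ℝ) =
        (⟨Real.cos (π / q), Real.sin (π / q), 0, 0⟩ : Quaternion ℝ) ∧
      ∃ x y, ρ x * ρ y ≠ ρ y * ρ x := by
  set b := circleToSphere (Circle.exp (π / q))
  have hq_one_lt : (1 : ℝ) < q := by exact_mod_cast hq
  have hb : b ^ q = circleToSphere (Circle.exp π) := by
    rw [← map_pow, ← Circle.exp_natCast_mul, mul_div_cancel₀ _ (by positivity)]
  have hz : circleToSphere (Circle.exp π) ^ 2 = 1 := by
    rw [← map_pow, ← Circle.exp_natCast_mul, Nat.cast_two, Circle.exp_two_pi, map_one]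
  have hconj : sphereJ * b * sphereJ⁻¹ * b = 1 := by
    rw [sphereJ_mul_circleToSphere_mul_inv, inv_mul_cancel]
  have hpow := zpow_two_mul_mul_pow_eq_one hp sphereJ_sq hb hz
  refine ⟨PresentedGroup.toGroup (lift_surgeryRels_eq_one hconj hpow), ?_, ?_,
    PresentedGroup.of 0, PresentedGroup.of 1, ?_⟩
  · rw [PresentedGroup.toGroup.of]; rfl
  · rw [PresentedGroup.toGroup.of]; exact coeComplex_exp_mul_I _
  · simp only [PresentedGroup.toGroup.of]
    refine (commute_sphereJ_circleToSphere_iff _).not.mpr ?_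
    rw [Circle.coe_exp, Complex.exp_ofReal_mul_I_im]
    exact (sin_pi_div_pos hq_one_lt).ne'
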